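/- Let (S_n^+), (S_n^-) be complex sequences with ∑ |S_n^±| < ∞, let (g_n^±) ∈ ℓ¹ satisfy the coupled system g_n^± = ∑_{m=1}^∞ (2 S_m^±/(m+n)) g_m^∓, and define g^±(u) = -∑_{m,k} (2 S_m^∓ S_k^±/(m+k)) e^{-ku/2} g_m^±. Then g^± satisfies the homogeneous integral equation g^±(s) - ∫_0^∞ z^±(u+s) g^∓(u) du = 0 for all s ≥ 0, where z^±(t) = ∑_{m=1}^∞ S_m^± e^{-mt/2}. Consequently, if the integral equation has only the trivial solution among functions bounded by C e^{-u/2}, then the algebraic system has only the trivial solution in ℓ¹. -/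

import Mathlib

/-!
Swapping the order of summation in the definition of `g^±` (the double series converges
absolutely) and using the system for `g^∓` gives `g^±(u) = -∑_k S_k^± g_k^∓ e^{-ku/2}`.
Multiplying out `z^±(u+s) g^∓(u)` and integrating term by term (Fubini, again by absolute
convergence), `∫_0^∞ e^{-k(u+s)/2} e^{-mu/2} du = 2 e^{-ks/2}/(m+k)` turns the integral into
`-∑_k S_k^± e^{-ks/2} ∑_m 2 S_m^∓ g_m^±/(m+k)`, which is `g^±(s)` by the system.

Conversely, these `g^±` are bounded by `C e^{-u/2}`, so the uniqueness hypothesis makes them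
vanish. With `x = e^{-u/2}`, `-g^±` is `x` times a power series `∑_k a_k x^k` that converges on
the closed unit disc and vanishes on `(0, 1)`; by isolated zeros all `a_k = S_k^± g_k^∓` vanish,
hence so do the right-hand sides of the system.
-/

open MeasureTheory Set Filter Topology

namespace Marchenko

/-- Indices are shifted by one: `expMode k` is the paper's `e^{-nu/2}` with `n = k + 1`. -/
noncomputable def expMode (k : ℕ) (u : ℝ) : ℂ := Complex.exp (-(((k : ℂ) + 1) * (u : ℂ)) / 2)

noncomputable def expSeries (c : ℕ → ℂ) (u : ℝ) : ℂ := ∑' k, c k * expMode k u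

noncomputable def coupledSum (σ g : ℕ → ℂ) (n : ℕ) : ℂ :=
  ∑' m, 2 * σ m / (((m : ℂ) + 1) + ((n : ℂ) + 1)) * g m

lemma expMode_eq_pow (k : ℕ) (u : ℝ) : expMode k u = ((Real.exp (-u / 2) : ℝ) : ℂ) ^ (k + 1) := by
  rw [expMode, Complex.ofReal_exp, ← Complex.exp_nat_mul]
  push_cast
  ring_nf

lemma norm_expMode_le (k : ℕ) {u : ℝ} (hu : 0 ≤ u) : ‖expMode k u‖ ≤ Real.exp (-u / 2) := by
  rw [expMode_eq_pow, norm_pow, Complex.norm_real, Real.norm_of_nonneg (Real.exp_pos _).le]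
  exact pow_le_of_le_one (Real.exp_pos _).le (Real.exp_le_one_iff.mpr (by linarith)) (by omega)

lemma norm_expMode_le_one (k : ℕ) {u : ℝ} (hu : 0 ≤ u) : ‖expMode k u‖ ≤ 1 :=
  (norm_expMode_le k hu).trans (Real.exp_le_one_iff.mpr (by linarith))

lemma expMode_add_mul_expMode (k m : ℕ) (s u : ℝ) :
    expMode k (u + s) * expMode m u
      = expMode k s * Complex.exp (-(((m : ℂ) + 1) + ((k : ℂ) + 1)) / 2 * u) := by
  simp only [expMode, ← Complex.exp_add]
  push_cast
  ring_nf

lemma re_neg_succ_add_succ_div_two_lt_zero (m k : ℕ) :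
    (-(((m : ℂ) + 1) + ((k : ℂ) + 1)) / 2).re < 0 := by
  simp only [Complex.div_ofNat_re, Complex.neg_re, Complex.add_re, Complex.natCast_re,
    Complex.one_re]
  linarith [(m.cast_nonneg : (0 : ℝ) ≤ m), (k.cast_nonneg : (0 : ℝ) ≤ k)]

lemma integrableOn_expMode_mul_expMode (k m : ℕ) (s : ℝ) :
    IntegrableOn (fun u => expMode k (u + s) * expMode m u) (Ioi 0) := by
  simp only [expMode_add_mul_expMode]
  exact (integrableOn_exp_mul_complex_Ioi (re_neg_succ_add_succ_div_two_lt_zero m k) 0).const_mul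
    _

lemma integral_expMode_mul_expMode (k m : ℕ) (s : ℝ) :
    ∫ u in Ioi 0, expMode k (u + s) * expMode m u
      = 2 / (((m : ℂ) + 1) + ((k : ℂ) + 1)) * expMode k s := by
  have hd : ((m : ℂ) + 1) + ((k : ℂ) + 1) ≠ 0 := by norm_cast
  simp only [expMode_add_mul_expMode]
  rw [integral_const_mul,
    integral_exp_mul_complex_Ioi (re_neg_succ_add_succ_div_two_lt_zero m k)]
  field_simp
  simp

lemma norm_expMode_mul_expMode_le (k m : ℕ) {s u : ℝ} (hs : 0 ≤ s) (hu : 0 ≤ u) :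
    ‖expMode k (u + s) * expMode m u‖ ≤ Real.exp (-u) := by
  calc ‖expMode k (u + s) * expMode m u‖
      ≤ Real.exp (-(u + s) / 2) * Real.exp (-u / 2) := by
        rw [norm_mul]
        gcongr
        exacts [norm_expMode_le k (by linarith), norm_expMode_le m hu]
    _ ≤ Real.exp (-u / 2) * Real.exp (-u / 2) := by gcongr; linarith
    _ = Real.exp (-u) := by rw [← Real.exp_add]; ring_nf

lemma norm_two_div_le_one (m n : ℕ) : ‖(2 : ℂ) / (((m : ℂ) + 1) + ((n : ℂ) + 1))‖ ≤ 1 := by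
  have hd : ((m : ℂ) + 1) + ((n : ℂ) + 1) = ((m + n + 2 : ℕ) : ℂ) := by push_cast; ring
  rw [hd, norm_div, Complex.norm_natCast, div_le_one (by positivity)]
  norm_num
  positivity

lemma summable_norm_mul {a b : ℕ → ℂ} (ha : Summable fun n => ‖a n‖)
    (hb : Summable fun n => ‖b n‖) : Summable fun n => ‖a n * b n‖ :=
  .of_nonneg_of_le (fun _ => norm_nonneg _)
    (fun n => (norm_mul_le _ _).trans
      (mul_le_mul_of_nonneg_right (ha.le_tsum n fun _ _ => norm_nonneg _) (norm_nonneg _)))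
    (hb.mul_left _)

lemma summable_mul_mul_of_norm_le_one {a b : ℕ → ℂ} (ha : Summable fun n => ‖a n‖)
    (hb : Summable fun n => ‖b n‖) {c : ℕ × ℕ → ℂ} (hc : ∀ p, ‖c p‖ ≤ 1) :
    Summable fun p : ℕ × ℕ => a p.1 * b p.2 * c p :=
  .of_norm_bounded (ha.mul_norm hb) fun p => by
    rw [norm_mul]
    exact mul_le_of_le_one_right (norm_nonneg _) (hc p)

lemma tsum_tsum_eq_expSeries {σ τ g h : ℕ → ℂ} (hσg : Summable fun m => ‖σ m * g m‖)
    (hτ : Summable fun k => ‖τ k‖) (hh : ∀ n, h n = coupledSum σ g n) {u : ℝ} (hu : 0 ≤ u) :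
    ∑' m, ∑' k, 2 * σ m * τ k / (((m : ℂ) + 1) + ((k : ℂ) + 1)) * expMode k u * g m
      = expSeries (fun k => τ k * h k) u := by
  obtain rfl : h = coupledSum σ g := funext hh
  have hF : Summable (Function.uncurry fun m k =>
      2 * σ m * τ k / (((m : ℂ) + 1) + ((k : ℂ) + 1)) * expMode k u * g m) := by
    refine (summable_mul_mul_of_norm_le_one hσg hτ (c := fun p =>
      2 / (((p.1 : ℂ) + 1) + ((p.2 : ℂ) + 1)) * expMode p.2 u) fun p => ?_).congr fun p => ?_
    · rw [norm_mul]
      exact mul_le_one₀ (norm_two_div_le_one _ _) (norm_nonneg _) (norm_expMode_le_one _ hu)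
    · simp only [Function.uncurry]
      ring
  rw [← hF.tsum_comm, expSeries]
  refine tsum_congr fun k => ?_
  rw [coupledSum, ← tsum_mul_left, ← tsum_mul_right]
  exact tsum_congr fun m => by ring

lemma summable_norm_mul_expMode {c : ℕ → ℂ} (hc : Summable fun n => ‖c n‖) {t : ℝ}
    (ht : 0 ≤ t) : Summable fun k => ‖c k * expMode k t‖ :=
  .of_nonneg_of_le (fun _ => norm_nonneg _)
    (fun k => (norm_mul _ _).trans_le
      (mul_le_of_le_one_right (norm_nonneg _) (norm_expMode_le_one k ht))) hc

lemma expSeries_mul_expSeries {a b : ℕ → ℂ} (ha : Summable fun n => ‖a n‖)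
    (hb : Summable fun n => ‖b n‖) {t u : ℝ} (ht : 0 ≤ t) (hu : 0 ≤ u) :
    expSeries a t * expSeries b u
      = ∑' p : ℕ × ℕ, a p.1 * b p.2 * (expMode p.1 t * expMode p.2 u) := by
  rw [expSeries, expSeries, tsum_mul_tsum_of_summable_norm (summable_norm_mul_expMode ha ht)
    (summable_norm_mul_expMode hb hu)]
  exact tsum_congr fun p => by ring

lemma integral_norm_expMode_mul_expMode_le (k m : ℕ) {s : ℝ} (hs : 0 ≤ s) :
    ∫ u in Ioi 0, ‖expMode k (u + s) * expMode m u‖ ≤ 1 :=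
  calc ∫ u in Ioi 0, ‖expMode k (u + s) * expMode m u‖
      ≤ ∫ u in Ioi 0, Real.exp (-u) :=
        setIntegral_mono_on (integrableOn_expMode_mul_expMode k m s).norm
          (integrableOn_exp_neg_Ioi 0) measurableSet_Ioi fun _ hu =>
          norm_expMode_mul_expMode_le k m hs (le_of_lt hu)
    _ = 1 := integral_exp_neg_Ioi_zero

lemma integral_expSeries_mul_expSeries {σ τ g : ℕ → ℂ} (hτ : Summable fun k => ‖τ k‖)
    (hσg : Summable fun m => ‖σ m * g m‖) {s : ℝ} (hs : 0 ≤ s) :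
    ∫ u in Ioi 0, expSeries τ (u + s) * expSeries (fun m => σ m * g m) u
      = expSeries (fun k => τ k * coupledSum σ g k) s := by
  set F : ℕ × ℕ → ℝ → ℂ := fun p u =>
    τ p.1 * (σ p.2 * g p.2) * (expMode p.1 (u + s) * expMode p.2 u)
  have hF_int : ∀ p, IntegrableOn (F p) (Ioi 0) := fun p =>
    (integrableOn_expMode_mul_expMode p.1 p.2 s).const_mul _
  have hF_norm : ∀ p, ∫ u in Ioi 0, ‖F p u‖ ≤ ‖τ p.1 * (σ p.2 * g p.2)‖ := fun p => by
    simp only [F, norm_mul _ (expMode _ _ * _), integral_const_mul]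
    exact mul_le_of_le_one_right (norm_nonneg _) (integral_norm_expMode_mul_expMode_le _ _ hs)
  have hF_sum : Summable fun p => ∫ u in Ioi 0, ‖F p u‖ :=
    .of_nonneg_of_le (fun p => integral_nonneg fun _ => norm_nonneg _) hF_norm
      (Summable.mul_norm (f := τ) (g := fun m => σ m * g m) hτ hσg)
  have hF_tsum : EqOn (fun u => expSeries τ (u + s) * expSeries (fun m => σ m * g m) u)
      (fun u => ∑' p, F p u) (Ioi 0) := fun u hu =>
    expSeries_mul_expSeries hτ hσg (by linarith [mem_Ioi.mp hu]) (le_of_lt hu)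
  calc ∫ u in Ioi 0, expSeries τ (u + s) * expSeries (fun m => σ m * g m) u
      = ∑' p, ∫ u in Ioi 0, F p u := by
        rw [setIntegral_congr_fun measurableSet_Ioi hF_tsum,
          integral_tsum_of_summable_integral_norm hF_int hF_sum]
    _ = ∑' k, ∑' m, ∫ u in Ioi 0, F (k, m) u :=
        (Summable.of_norm_bounded hF_sum fun p => norm_integral_le_integral_norm _).tsum_prod
    _ = expSeries (fun k => τ k * coupledSum σ g k) s := by
        refine tsum_congr fun k => ?_
        simp only [F, integral_const_mul, integral_expMode_mul_expMode, coupledSum,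
          ← tsum_mul_left, ← tsum_mul_right]
        exact tsum_congr fun m => by ring

lemma eq_zero_of_tsum_mul_pow_eq_zero {c : ℕ → ℂ} (hc : Summable fun n => ‖c n‖)
    (h : ∀ x : ℝ, 0 < x → x < 1 → ∑' n, c n * (x : ℂ) ^ n = 0) : c = 0 := by
  set p := FormalMultilinearSeries.ofScalars ℂ c
  have hr : 1 ≤ p.radius := by
    simpa using p.le_radius_of_summable_norm (r := 1)
      (by simpa [p, FormalMultilinearSeries.ofScalars_norm] using hc)
  have hp : HasFPowerSeriesAt p.sum p 0 :=
    (p.hasFPowerSeriesOnBall (zero_lt_one.trans_le hr)).hasFPowerSeriesAt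
  rw [← FormalMultilinearSeries.ofScalars_series_eq_zero (E := ℂ)]
  by_contra hne
  have hofReal : Tendsto (fun x : ℝ => (x : ℂ)) (𝓝[>] 0) (𝓝[≠] 0) :=
    Complex.continuous_ofReal.continuousWithinAt.tendsto_nhdsWithin fun x hx => by
      simpa using (ne_of_gt hx)
  have hzero : ∀ᶠ x : ℝ in 𝓝[>] 0, p.sum x = 0 := by
    filter_upwards [Ioo_mem_nhdsGT one_pos] with x hx
    simpa [FormalMultilinearSeries.sum, p, FormalMultilinearSeries.ofScalars_apply_eq, mul_comm]
      using h x hx.1 hx.2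
  obtain ⟨x, hx0, hx⟩ := (hzero.and (hofReal.eventually (hp.locally_ne_zero hne))).exists
  exact hx hx0

lemma eq_zero_of_expSeries_eq_zero {a : ℕ → ℂ} (ha : Summable fun n => ‖a n‖)
    (h : ∀ u, 0 ≤ u → expSeries a u = 0) : a = 0 := by
  refine eq_zero_of_tsum_mul_pow_eq_zero ha fun x hx0 hx1 => ?_
  have hu : 0 ≤ -2 * Real.log x := by nlinarith [Real.log_nonpos hx0.le hx1.le]
  have hx : Real.exp (-(-2 * Real.log x) / 2) = x := by
    rw [show -(-2 * Real.log x) / 2 = Real.log x by ring, Real.exp_log hx0]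
  have hsum := h _ hu
  simp only [expSeries, expMode_eq_pow, hx, pow_succ, ← mul_assoc, tsum_mul_right] at hsum
  exact (mul_eq_zero.mp hsum).resolve_right (by exact_mod_cast hx0.ne')

lemma norm_expSeries_le {c : ℕ → ℂ} (hc : Summable fun n => ‖c n‖) {u : ℝ} (hu : 0 ≤ u) :
    ‖expSeries c u‖ ≤ (∑' k, ‖c k‖) * Real.exp (-u / 2) :=
  tsum_of_norm_bounded (hc.hasSum.mul_right _) fun k => by
    rw [norm_mul]
    exact mul_le_mul_of_nonneg_left (norm_expMode_le k hu) (norm_nonneg _)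

lemma coupledSum_eq_zero {σ g : ℕ → ℂ} (h : ∀ m, σ m * g m = 0) (n : ℕ) :
    coupledSum σ g n = 0 := by
  simp [coupledSum, mul_div_right_comm, mul_assoc, h]

lemma marchenko_of_coupledSum {σ τ g h : ℕ → ℂ} {z G G' : ℝ → ℂ}
    (hτ : Summable fun k => ‖τ k‖) (hσg : Summable fun m => ‖σ m * g m‖)
    (hh : ∀ n, h n = coupledSum σ g n) (hz : ∀ t, z t = expSeries τ t)
    (hG : ∀ u, 0 ≤ u → G u = -expSeries (fun k => τ k * h k) u)
    (hG' : ∀ u, 0 ≤ u → G' u = -expSeries (fun m => σ m * g m) u) {s : ℝ} (hs : 0 ≤ s) :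
    G s - ∫ u in Ioi 0, z (u + s) * G' u = 0 := by
  obtain rfl : h = coupledSum σ g := funext hh
  have hintegrand : EqOn (fun u => z (u + s) * G' u)
      (fun u => -(expSeries τ (u + s) * expSeries (fun m => σ m * g m) u)) (Ioi 0) :=
    fun u hu => by simp only [hz, hG' u (le_of_lt hu), mul_neg]
  rw [setIntegral_congr_fun measurableSet_Ioi hintegrand, integral_neg,
    integral_expSeries_mul_expSeries hτ hσg hs, hG s hs, sub_neg_eq_add, neg_add_cancel]

end Marchenko

open Marchenko

/-- If `(g_n^±) ∈ ℓ¹` solves the coupled system, then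
`g^±(u) = -∑_{m,k} (2 S_m^∓ S_k^±/(m+k)) e^{-ku/2} g_m^±` solves the homogeneous Marchenko
equation `g^±(s) = ∫_0^∞ z^±(u+s) g^∓(u) du`; consequently, if that integral equation has
only the trivial solution among functions bounded by `C e^{-u/2}`, the algebraic system has
only the trivial solution in `ℓ¹`. -/
theorem stmt5 (Sp Sm gp gm : ℕ → ℂ)
    (hSp : Summable fun n : ℕ => ‖Sp (n + 1)‖)
    (hSm : Summable fun n : ℕ => ‖Sm (n + 1)‖)
    (hgp : Summable fun n : ℕ => ‖gp (n + 1)‖)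
    (hgm : Summable fun n : ℕ => ‖gm (n + 1)‖)
    (heqp : ∀ n : ℕ, gp (n + 1) =
      ∑' m : ℕ, 2 * Sp (m + 1) / (((m : ℂ) + 1) + ((n : ℂ) + 1)) * gm (m + 1))
    (heqm : ∀ n : ℕ, gm (n + 1) =
      ∑' m : ℕ, 2 * Sm (m + 1) / (((m : ℂ) + 1) + ((n : ℂ) + 1)) * gp (m + 1))
    (zp zm Gp Gm : ℝ → ℂ)
    (hzp : ∀ t : ℝ, zp t = ∑' m : ℕ, Sp (m + 1) * Complex.exp (-(((m : ℂ) + 1) * (t : ℂ)) / 2))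
    (hzm : ∀ t : ℝ, zm t = ∑' m : ℕ, Sm (m + 1) * Complex.exp (-(((m : ℂ) + 1) * (t : ℂ)) / 2))
    (hGp : ∀ u : ℝ, Gp u =
      -∑' m : ℕ, ∑' k : ℕ,
        2 * Sm (m + 1) * Sp (k + 1) / (((m : ℂ) + 1) + ((k : ℂ) + 1))
          * Complex.exp (-(((k : ℂ) + 1) * (u : ℂ)) / 2) * gp (m + 1))
    (hGm : ∀ u : ℝ, Gm u =
      -∑' m : ℕ, ∑' k : ℕ,
        2 * Sp (m + 1) * Sm (k + 1) / (((m : ℂ) + 1) + ((k : ℂ) + 1))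
          * Complex.exp (-(((k : ℂ) + 1) * (u : ℂ)) / 2) * gm (m + 1)) :
    ((∀ s : ℝ, 0 ≤ s →
        Gp s - ∫ u in Set.Ioi (0 : ℝ), zp (u + s) * Gm u = 0) ∧
     (∀ s : ℝ, 0 ≤ s →
        Gm s - ∫ u in Set.Ioi (0 : ℝ), zm (u + s) * Gp u = 0)) ∧
    ((∀ fp fm : ℝ → ℂ,
        (∃ C : ℝ, ∀ u : ℝ, 0 ≤ u →
          ‖fp u‖ ≤ C * Real.exp (-u / 2) ∧ ‖fm u‖ ≤ C * Real.exp (-u / 2)) →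
        (∀ s : ℝ, 0 ≤ s →
          fp s - ∫ u in Set.Ioi (0 : ℝ), zp (u + s) * fm u = 0) →
        (∀ s : ℝ, 0 ≤ s →
          fm s - ∫ u in Set.Ioi (0 : ℝ), zm (u + s) * fp u = 0) →
        ∀ u : ℝ, 0 ≤ u → fp u = 0 ∧ fm u = 0) →
      ∀ n : ℕ, gp (n + 1) = 0 ∧ gm (n + 1) = 0) := by
  have ha : Summable fun k => ‖Sp (k + 1) * gm (k + 1)‖ := summable_norm_mul hSp hgm
  have hb : Summable fun k => ‖Sm (k + 1) * gp (k + 1)‖ := summable_norm_mul hSm hgp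
  have hGp' : ∀ u, 0 ≤ u → Gp u = -expSeries (fun k => Sp (k + 1) * gm (k + 1)) u :=
    fun u hu => (hGp u).trans (congrArg _ (tsum_tsum_eq_expSeries hb hSp heqm hu))
  have hGm' : ∀ u, 0 ≤ u → Gm u = -expSeries (fun k => Sm (k + 1) * gp (k + 1)) u :=
    fun u hu => (hGm u).trans (congrArg _ (tsum_tsum_eq_expSeries ha hSm heqp hu))
  have hp := fun s => marchenko_of_coupledSum hSp hb heqm hzp hGp' hGm' (s := s)
  have hm := fun s => marchenko_of_coupledSum hSm ha heqp hzm hGm' hGp' (s := s)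
  refine ⟨⟨hp, hm⟩, fun H n => ?_⟩
  set C := (∑' k, ‖Sp (k + 1) * gm (k + 1)‖) + ∑' k, ‖Sm (k + 1) * gp (k + 1)‖
  have hzero := H Gp Gm ⟨C, fun u hu => ⟨?_, ?_⟩⟩ hp hm
  · have ha0 := eq_zero_of_expSeries_eq_zero ha fun u hu =>
      neg_eq_zero.mp ((hGp' u hu).symm.trans (hzero u hu).1)
    have hb0 := eq_zero_of_expSeries_eq_zero hb fun u hu =>
      neg_eq_zero.mp ((hGm' u hu).symm.trans (hzero u hu).2)
    exact ⟨(heqp n).trans (coupledSum_eq_zero (congrFun ha0) n),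
      (heqm n).trans (coupledSum_eq_zero (congrFun hb0) n)⟩
  · rw [hGp' u hu, norm_neg]
    exact (norm_expSeries_le ha hu).trans <| by gcongr; exact le_add_of_nonneg_right (by positivity)
  · rw [hGm' u hu, norm_neg]
    exact (norm_expSeries_le hb hu).trans <| by gcongr; exact le_add_of_nonneg_left (by positivity)
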